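/- A vector x ∈ ℝⁿ is the mean score sequence of a random Coxeter tournament of type Bₙ on the complete signed graph if and only if |x| = (|x₁|,…,|xₙ|) is weakly sub-majorized by ρ = (1/2, 3/2, …, n - 1/2). -/

import Mathlib

open Finset

/-- `u` is weakly sub-majorized by `v`. -/
def WeakSubMaj {α β : Type*} [Fintype α] [Fintype β] (u : α → ℝ) (v : β → ℝ) : Prop :=
  ∀ S : Finset α, ∃ T : Finset β, T.card = S.card ∧ ∑ i ∈ S, u i ≤ ∑ j ∈ T, v j

/-- `x` is the mean score sequence of a random Coxeter tournament of type `Bₙ`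
on the complete signed graph on `n` vertices. -/
def IsMeanScoreSeqB (n : ℕ) (x : Fin n → ℝ) : Prop :=
  ∃ (pm pp : Fin n → Fin n → ℝ) (ph : Fin n → ℝ),
    (∀ i j, 0 ≤ pm i j ∧ pm i j ≤ 1) ∧
    (∀ i j, i ≠ j → pm i j = 1 - pm j i) ∧
    (∀ i j, 0 ≤ pp i j ∧ pp i j ≤ 1) ∧
    (∀ i j, pp i j = pp j i) ∧
    (∀ i, 0 ≤ ph i ∧ ph i ≤ 1) ∧
    (∀ i, x i = ∑ j ∈ univ.erase i, (pm i j - 1/2)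
              + ∑ j ∈ univ.erase i, (pp i j - 1/2)
              + (ph i - 1/2))

/-!
The scores depend affinely on the probabilities, so the mean score sequences form a convex set.
It contains `ρ` (the transitive tournament) and is invariant under permuting the vertices and under
multiplying the score of each vertex by a factor in `[-1, 1]` (interpolating between keeping and
reflecting its games). Hence it contains the convex hull of all signed permutations of `ρ`.

For a set `S` of `k` vertices, `∑_{i ∈ S} |xᵢ|` is at most `k(k-1)/2` from the games inside
`S`, `k(n-k)` from the games leaving `S` and `k/2` from the half-edges: this is the sum of the `k`
largest entries of `ρ`. Conversely, if `|y| ≼_w ρ` and `y` were outside the convex hull of the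
signed permutations of `ρ`, a separating functional `c` would satisfy `c ⬝ y > ∑ |c|↓ᵢ ρ↓ᵢ`,
whereas Abel summation against the weak majorization gives `c ⬝ y ≤ ∑ |cᵢ| |yᵢ| ≤ ∑ |c|↓ᵢ ρ↓ᵢ`.
-/

lemma abs_add_mul_add_sub_mul_le {s t a b : ℝ} (hs : |s| ≤ 1) (ht : |t| ≤ 1)
    (ha : |a| ≤ 1 / 2) (hb : |b| ≤ 1 / 2) : |(s + t) * a + (s - t) * b| ≤ 1 := by
  have hst : |s + t| + |s - t| ≤ 2 := by
    rw [abs_le] at hs ht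
    rcases abs_cases (s + t) with ⟨h₁, -⟩ | ⟨h₁, -⟩ <;>
      rcases abs_cases (s - t) with ⟨h₂, -⟩ | ⟨h₂, -⟩ <;> linarith
  calc |(s + t) * a + (s - t) * b| ≤ |s + t| * |a| + |s - t| * |b| := by
        simpa only [abs_mul] using abs_add_le ((s + t) * a) ((s - t) * b)
    _ ≤ |s + t| * (1 / 2) + |s - t| * (1 / 2) := by gcongr
    _ ≤ 1 := by linarith

lemma abs_signType_coe_le_one (s : SignType) : |(s : ℝ)| ≤ 1 := by
  cases s <;> simp

lemma sum_mul_nonpos_of_suffix_sum_nonpos {n : ℕ} {b d : Fin n → ℝ} (hb : Monotone b)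
    (hb0 : ∀ i, 0 ≤ b i) (hd : ∀ m : ℕ, ∑ i : Fin n with m ≤ i.val, d i ≤ 0) :
    ∑ i, b i * d i ≤ 0 := by
  induction n with
  | zero => simp
  | succ n ih =>
    have hd' (m : ℕ) : ∑ i : Fin n with m ≤ i.val, d i.succ ≤ 0 := by
      simpa [sum_filter, Fin.sum_univ_succ] using hd (m + 1)
    have hsucc := ih (b := fun i => b i.succ - b 0) (fun i j hij => by
      simpa using hb (Fin.succ_le_succ_iff.2 hij)) (fun i => sub_nonneg.2 (hb (Fin.zero_le _))) hd'
    calc ∑ i, b i * d i = b 0 * ∑ i, d i + ∑ i : Fin n, (b i.succ - b 0) * d i.succ := by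
          simp only [Fin.sum_univ_succ, sub_mul, sum_sub_distrib, mul_add, mul_sum]
          ring
      _ ≤ 0 := add_nonpos (mul_nonpos_of_nonneg_of_nonpos (hb0 0) (by simpa using hd 0)) hsucc

lemma Fin.card_filter_le_val (n m : ℕ) : #{i : Fin n | m ≤ i.val} = n - m := by
  have := card_filter_add_card_filter_not (s := univ) (fun i : Fin n => i.val < m)
  simp only [Fin.card_filter_val_lt, not_lt, card_univ, Fintype.card_fin] at this
  omega

lemma sum_le_sum_filter_le_of_card_le {n m : ℕ} {f : Fin n → ℝ} (hf : Monotone f)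
    (hf0 : ∀ i, 0 ≤ f i) {T : Finset (Fin n)} (hT : #T ≤ n - m) :
    ∑ i ∈ T, f i ≤ ∑ i : Fin n with m ≤ i.val, f i := by
  have key := sum_mul_nonpos_of_suffix_sum_nonpos hf hf0
    (d := fun i => (if i ∈ T then 1 else 0) - if m ≤ i.val then 1 else 0) fun k => by
      have h₁ : #{i | k ≤ i.val ∧ i ∈ T} ≤ #T := card_le_card fun i hi => (mem_filter.1 hi).2.2
      have h₂ : #{i | k ≤ i.val ∧ i ∈ T} ≤ #{i : Fin n | k ≤ i.val} :=
        card_le_card fun i hi => mem_filter.2 ⟨mem_univ i, (mem_filter.1 hi).2.1⟩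
      have hmk : #{i : Fin n | k ≤ i.val ∧ m ≤ i.val} = n - max m k := by
        simp only [← max_le_iff, max_comm k m, Fin.card_filter_le_val]
      simp only [sum_sub_distrib, sum_boole, filter_filter]
      rw [hmk, sub_nonpos, Nat.cast_le]
      rw [Fin.card_filter_le_val] at h₂
      omega
  simpa [mul_sub, sum_sub_distrib, mul_boole, sum_ite_mem, sum_filter] using key

lemma sum_range_natCast (k : ℕ) : ∑ l ∈ range k, (l : ℝ) = k * (k - 1 : ℝ) / 2 := by
  induction k with
  | zero => simp
  | succ k ih => rw [sum_range_succ, ih]; push_cast; ring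

lemma sum_filter_le_val_add_half {n k : ℕ} (hk : k ≤ n) :
    ∑ i : Fin n with n - k ≤ i.val, ((i : ℝ) + 1 / 2) =
      k * (k - 1 : ℝ) / 2 + k * (n - k : ℝ) + k / 2 := by
  have hIco : (range n).filter (fun i => n - k ≤ i) = Ico (n - k) n := by ext; simp; omega
  rw [sum_filter, Fin.sum_univ_eq_sum_range (fun i => if n - k ≤ i then (i : ℝ) + 1 / 2 else 0),
    ← sum_filter, hIco, sum_Ico_eq_sum_range, Nat.sub_sub_self hk]
  simp only [Nat.cast_add, Nat.cast_sub hk, sum_add_distrib, sum_range_natCast, sum_const,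
    card_range, nsmul_eq_mul]
  ring

/-- A random Coxeter tournament of type `Bₙ` recorded by the centered probabilities
`p⁻ᵢⱼ - 1/2`, `p⁺ᵢⱼ - 1/2` and `pʰᵢ - 1/2`, with the diagonal (no games) set to zero. -/
structure CenteredTournamentB (n : ℕ) where
  minus : Fin n → Fin n → ℝ
  plus : Fin n → Fin n → ℝ
  half : Fin n → ℝ
  minus_antisymm : ∀ i j, minus j i = -minus i j
  plus_symm : ∀ i j, plus j i = plus i j
  plus_self : ∀ i, plus i i = 0
  abs_minus_le : ∀ i j, |minus i j| ≤ 1 / 2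
  abs_plus_le : ∀ i j, |plus i j| ≤ 1 / 2
  abs_half_le : ∀ i, |half i| ≤ 1 / 2

namespace CenteredTournamentB

variable {n : ℕ}

def score (T : CenteredTournamentB n) (i : Fin n) : ℝ :=
  ∑ j, (T.minus i j + T.plus i j) + T.half i

lemma minus_self (T : CenteredTournamentB n) (i : Fin n) : T.minus i i = 0 := by
  linarith [T.minus_antisymm i i]

lemma score_eq_sum_erase (T : CenteredTournamentB n) (i : Fin n) :
    T.score i = ∑ j ∈ univ.erase i, (T.minus i j + T.plus i j) + T.half i := by
  rw [score, sum_erase (f := fun j => T.minus i j + T.plus i j) univ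
    (by simp [T.minus_self, T.plus_self])]

def relabel (T : CenteredTournamentB n) (σ : Equiv.Perm (Fin n)) : CenteredTournamentB n where
  minus i j := T.minus (σ i) (σ j)
  plus i j := T.plus (σ i) (σ j)
  half i := T.half (σ i)
  minus_antisymm _ _ := T.minus_antisymm _ _
  plus_symm _ _ := T.plus_symm _ _
  plus_self _ := T.plus_self _
  abs_minus_le _ _ := T.abs_minus_le _ _
  abs_plus_le _ _ := T.abs_plus_le _ _
  abs_half_le _ := T.abs_half_le _

lemma score_relabel (T : CenteredTournamentB n) (σ : Equiv.Perm (Fin n)) :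
    (T.relabel σ).score = T.score ∘ σ := by
  ext i
  simp only [score, relabel, Function.comp_apply,
    Equiv.sum_comp σ fun j => T.minus (σ i) j + T.plus (σ i) j]

/-- For `ε` with values `±1`, the game between `i` and `j` is reflected when `ε i = ε j = -1` and
has its two edges exchanged (up to reflection) when `ε i ≠ ε j`; general `ε` interpolates. -/
noncomputable def smul (T : CenteredTournamentB n) (ε : Fin n → ℝ) (hε : ∀ i, |ε i| ≤ 1) :
    CenteredTournamentB n where
  minus i j := ((ε i + ε j) * T.minus i j + (ε i - ε j) * T.plus i j) / 2
  plus i j := ((ε i + ε j) * T.plus i j + (ε i - ε j) * T.minus i j) / 2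
  half i := ε i * T.half i
  minus_antisymm i j := by rw [T.minus_antisymm i j, T.plus_symm i j]; ring
  plus_symm i j := by rw [T.minus_antisymm i j, T.plus_symm i j]; ring
  plus_self i := by rw [T.plus_self i]; ring
  abs_minus_le i j := by
    rw [abs_div, abs_two]
    linarith [abs_add_mul_add_sub_mul_le (hε i) (hε j) (T.abs_minus_le i j) (T.abs_plus_le i j)]
  abs_plus_le i j := by
    rw [abs_div, abs_two]
    linarith [abs_add_mul_add_sub_mul_le (hε i) (hε j) (T.abs_plus_le i j) (T.abs_minus_le i j)]
  abs_half_le i := by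
    rw [abs_mul]
    nlinarith [hε i, T.abs_half_le i, abs_nonneg (ε i), abs_nonneg (T.half i)]

lemma score_smul (T : CenteredTournamentB n) (ε : Fin n → ℝ) (hε : ∀ i, |ε i| ≤ 1) (i : Fin n) :
    (T.smul ε hε).score i = ε i * T.score i := by
  simp only [score, smul, mul_add, mul_sum]
  congr 1
  exact sum_congr rfl fun j _ => by ring

def convexComb (T T' : CenteredTournamentB n) {a b : ℝ} (ha : 0 ≤ a) (hb : 0 ≤ b)
    (hab : a + b = 1) : CenteredTournamentB n where
  minus i j := a * T.minus i j + b * T'.minus i j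
  plus i j := a * T.plus i j + b * T'.plus i j
  half i := a * T.half i + b * T'.half i
  minus_antisymm i j := by rw [T.minus_antisymm, T'.minus_antisymm]; ring
  plus_symm i j := by rw [T.plus_symm, T'.plus_symm]
  plus_self i := by rw [T.plus_self, T'.plus_self]; ring
  abs_minus_le i j := abs_le.2 <|
    convex_Icc _ _ (abs_le.1 (T.abs_minus_le i j)) (abs_le.1 (T'.abs_minus_le i j)) ha hb hab
  abs_plus_le i j := abs_le.2 <|
    convex_Icc _ _ (abs_le.1 (T.abs_plus_le i j)) (abs_le.1 (T'.abs_plus_le i j)) ha hb hab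
  abs_half_le i := abs_le.2 <|
    convex_Icc _ _ (abs_le.1 (T.abs_half_le i)) (abs_le.1 (T'.abs_half_le i)) ha hb hab

lemma score_convexComb (T T' : CenteredTournamentB n) {a b : ℝ} (ha : 0 ≤ a) (hb : 0 ≤ b)
    (hab : a + b = 1) : (T.convexComb T' ha hb hab).score = a • T.score + b • T'.score := by
  ext i
  simp only [score, convexComb, Pi.add_apply, Pi.smul_apply, smul_eq_mul, mul_add,
    mul_sum]
  rw [add_add_add_comm, ← sum_add_distrib]
  congr 1
  exact sum_congr rfl fun j _ => by ring

noncomputable def transitive (n : ℕ) : CenteredTournamentB n where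
  minus i j := if j < i then 1 / 2 else if i < j then -(1 / 2) else 0
  plus i j := if i = j then 0 else 1 / 2
  half _ := 1 / 2
  minus_antisymm i j := by
    rcases lt_trichotomy i j with h | rfl | h
    · simp [h, h.not_gt]
    · simp
    · simp [h, h.not_gt]
  plus_symm i j := by simp only [eq_comm]
  plus_self i := by simp
  abs_minus_le i j := by split_ifs <;> norm_num
  abs_plus_le i j := by split_ifs <;> norm_num
  abs_half_le _ := by norm_num

lemma score_transitive (n : ℕ) (i : Fin n) : (transitive n).score i = (i : ℝ) + 1 / 2 := by
  have hgame j : (transitive n).minus i j + (transitive n).plus i j = if j < i then 1 else 0 := by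
    rcases lt_trichotomy j i with h | rfl | h
    · norm_num [transitive, h, h.ne']
    · simp [transitive]
    · simp [transitive, h, h.not_gt, h.ne]
  simp only [score, hgame, sum_boole]
  simp [transitive, filter_gt_eq_Iio]

theorem sum_abs_score_le (T : CenteredTournamentB n) (S : Finset (Fin n)) :
    ∑ i ∈ S, |T.score i| ≤ #S * (#S - 1 : ℝ) / 2 + #S * (n - #S : ℝ) + #S / 2 := by
  set ε : Fin n → ℝ := fun i => SignType.sign (T.score i)
  have hε i : |ε i| ≤ 1 := abs_signType_coe_le_one _
  set g : Fin n → Fin n → ℝ := fun i j => ε i * (T.minus i j + T.plus i j)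
  have hsplit : ∑ i ∈ S, |T.score i| = ∑ i ∈ S, ∑ j ∈ S, g i j + ∑ i ∈ S, ∑ j ∈ Sᶜ, g i j
      + ∑ i ∈ S, ε i * T.half i := by
    rw [← sum_add_distrib, ← sum_add_distrib]
    refine sum_congr rfl fun i _ => ?_
    rw [← sign_mul_self, score, mul_add, mul_sum, ← sum_add_sum_compl S]
    rfl
  -- each game inside `S` is counted from both ends, and contributes at most `1` in total
  have hinside : 2 * ∑ i ∈ S, ∑ j ∈ S, g i j ≤ #S * (#S - 1 : ℝ) := by
    have hpair i j : g i j + g j i ≤ 1 - if i = j then 1 else 0 := by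
      have : g i j + g j i = (ε i + -ε j) * T.minus i j + (ε i - -ε j) * T.plus i j := by
        simp only [g, T.minus_antisymm i j, T.plus_symm i j]; ring
      split_ifs with hij
      · subst hij
        simp [this, T.minus_self, T.plus_self]
      · rw [this, sub_zero]
        exact (le_abs_self _).trans (abs_add_mul_add_sub_mul_le (hε i)
          ((abs_neg (ε j)).trans_le (hε j)) (T.abs_minus_le i j) (T.abs_plus_le i j))
    calc 2 * ∑ i ∈ S, ∑ j ∈ S, g i j = ∑ i ∈ S, ∑ j ∈ S, (g i j + g j i) := by
          rw [two_mul]; nth_rw 2 [sum_comm]; simp only [← sum_add_distrib]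
      _ ≤ ∑ i ∈ S, ∑ j ∈ S, (1 - if i = j then (1 : ℝ) else 0) := by gcongr; exact hpair _ _
      _ = #S * (#S - 1 : ℝ) := by
          simp +contextual [sum_sub_distrib, mul_sub]
  have hcross : ∑ i ∈ S, ∑ j ∈ Sᶜ, g i j ≤ #S * (n - #S : ℝ) := by
    calc ∑ i ∈ S, ∑ j ∈ Sᶜ, g i j ≤ ∑ i ∈ S, ∑ j ∈ Sᶜ, (1 : ℝ) := by
          gcongr with i _ j _
          have h := abs_add_mul_add_sub_mul_le (hε i) (abs_zero.trans_le zero_le_one)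
            (T.abs_minus_le i j) (T.abs_plus_le i j)
          rw [add_zero, sub_zero, ← mul_add] at h
          exact (le_abs_self _).trans h
      _ = #S * (n - #S : ℝ) := by
          simp [card_compl, Nat.cast_sub (show #S ≤ n by simpa using card_le_univ S), mul_sub]
  have hhalf : ∑ i ∈ S, ε i * T.half i ≤ #S / 2 := by
    calc ∑ i ∈ S, ε i * T.half i ≤ ∑ i ∈ S, (1 / 2 : ℝ) := by
          gcongr with i
          refine (le_abs_self _).trans ?_
          rw [abs_mul]
          nlinarith [hε i, T.abs_half_le i, abs_nonneg (ε i), abs_nonneg (T.half i)]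
      _ = #S / 2 := by simp [div_eq_mul_inv]
  linarith

end CenteredTournamentB

lemma isMeanScoreSeqB_iff {n : ℕ} {x : Fin n → ℝ} :
    IsMeanScoreSeqB n x ↔ ∃ T : CenteredTournamentB n, T.score = x := by
  constructor
  · rintro ⟨pm, pp, ph, hpm, hpm_anti, hpp, hpp_symm, hph, hx⟩
    let T : CenteredTournamentB n :=
      { minus i j := if i = j then 0 else pm i j - 1 / 2
        plus i j := if i = j then 0 else pp i j - 1 / 2
        half i := ph i - 1 / 2
        minus_antisymm i j := by
          by_cases hij : i = j
          · simp [hij]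
          · simp only [if_neg hij, if_neg (Ne.symm hij), hpm_anti j i (Ne.symm hij)]
            ring
        plus_symm i j := by simp [eq_comm, hpp_symm i j]
        plus_self i := by simp
        abs_minus_le i j := by
          split_ifs
          · norm_num
          · rw [abs_le]; constructor <;> linarith [hpm i j]
        abs_plus_le i j := by
          split_ifs
          · norm_num
          · rw [abs_le]; constructor <;> linarith [hpp i j]
        abs_half_le i := by rw [abs_le]; constructor <;> linarith [hph i] }
    refine ⟨T, funext fun i => ?_⟩
    rw [hx i, T.score_eq_sum_erase, ← sum_add_distrib]
    congr 1
    exact sum_congr rfl fun j hj => by simp [T, (ne_of_mem_erase hj).symm]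
  · rintro ⟨T, rfl⟩
    refine ⟨fun i j => T.minus i j + 1 / 2, fun i j => T.plus i j + 1 / 2,
      fun i => T.half i + 1 / 2, fun i j => ?_, fun i j _ => ?_, fun i j => ?_, fun i j => ?_,
      fun i => ?_, fun i => ?_⟩
    · have := abs_le.1 (T.abs_minus_le i j); constructor <;> linarith
    · linarith [T.minus_antisymm i j]
    · have := abs_le.1 (T.abs_plus_le i j); constructor <;> linarith
    · simp only [T.plus_symm i j]
    · have := abs_le.1 (T.abs_half_le i); constructor <;> linarith
    · simp only [T.score_eq_sum_erase, sum_add_distrib, add_sub_cancel_right]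

lemma IsMeanScoreSeqB.comp_perm {n : ℕ} {x : Fin n → ℝ} (h : IsMeanScoreSeqB n x)
    (σ : Equiv.Perm (Fin n)) : IsMeanScoreSeqB n (x ∘ σ) := by
  obtain ⟨T, rfl⟩ := isMeanScoreSeqB_iff.1 h
  exact isMeanScoreSeqB_iff.2 ⟨T.relabel σ, T.score_relabel σ⟩

lemma IsMeanScoreSeqB.mul {n : ℕ} {x : Fin n → ℝ} (h : IsMeanScoreSeqB n x) {ε : Fin n → ℝ}
    (hε : ∀ i, |ε i| ≤ 1) : IsMeanScoreSeqB n (ε * x) := by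
  obtain ⟨T, rfl⟩ := isMeanScoreSeqB_iff.1 h
  exact isMeanScoreSeqB_iff.2 ⟨T.smul ε hε, funext (T.score_smul ε hε)⟩

lemma convex_setOf_isMeanScoreSeqB (n : ℕ) : Convex ℝ {x | IsMeanScoreSeqB n x} := by
  rintro _ hx _ hy a b ha hb hab
  obtain ⟨T, rfl⟩ := isMeanScoreSeqB_iff.1 hx
  obtain ⟨T', rfl⟩ := isMeanScoreSeqB_iff.1 hy
  exact isMeanScoreSeqB_iff.2 ⟨T.convexComb T' ha hb hab, T.score_convexComb T' ha hb hab⟩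

lemma isMeanScoreSeqB_rho (n : ℕ) : IsMeanScoreSeqB n fun i => (i : ℝ) + 1 / 2 :=
  isMeanScoreSeqB_iff.2
    ⟨CenteredTournamentB.transitive n, funext (CenteredTournamentB.score_transitive n)⟩

lemma WeakSubMaj.exists_perm_sum_mul_le {n : ℕ} {u f a : Fin n → ℝ} (hu : WeakSubMaj u f)
    (hf : Monotone f) (hf0 : ∀ i, 0 ≤ f i) (ha : ∀ i, 0 ≤ a i) :
    ∃ σ : Equiv.Perm (Fin n), ∑ i, a i * u i ≤ ∑ i, a i * f (σ i) := by
  set τ := Tuple.sort a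
  refine ⟨τ.symm, ?_⟩
  rw [← Equiv.sum_comp τ (fun i => a i * u i), ← Equiv.sum_comp τ (fun i => a i * f (τ.symm i)),
    ← sub_nonpos, ← sum_sub_distrib]
  simp only [Equiv.symm_apply_apply, ← mul_sub]
  refine sum_mul_nonpos_of_suffix_sum_nonpos (Tuple.monotone_sort a) (fun i => ha _) fun m => ?_
  obtain ⟨T, hT, hle⟩ := hu (({i | m ≤ i.val} : Finset (Fin n)).map τ.toEmbedding)
  have htop := sum_le_sum_filter_le_of_card_le hf hf0 (m := m) (T := T)
    (by rw [hT, card_map, Fin.card_filter_le_val])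
  rw [sum_map] at hle
  rw [sum_sub_distrib]
  exact sub_nonpos.2 (hle.trans htop)

theorem isMeanScoreSeqB_of_weakSubMaj {n : ℕ} {y : Fin n → ℝ}
    (hy : WeakSubMaj (fun i => |y i|) fun i : Fin n => (i : ℝ) + 1 / 2) : IsMeanScoreSeqB n y := by
  let K : Set (Fin n → ℝ) := Set.range fun p : Equiv.Perm (Fin n) × (Fin n → SignType) =>
    fun i => (p.2 i : ℝ) * ((p.1 i : ℝ) + 1 / 2)
  have hK : convexHull ℝ K ⊆ {x | IsMeanScoreSeqB n x} := by
    refine convexHull_min ?_ (convex_setOf_isMeanScoreSeqB n)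
    rintro _ ⟨⟨σ, s⟩, rfl⟩
    exact ((isMeanScoreSeqB_rho n).comp_perm σ).mul fun i => abs_signType_coe_le_one (s i)
  by_contra hyK
  obtain ⟨f, u, hfK, hfy⟩ := geometric_hahn_banach_closed_point (convex_convexHull ℝ K)
    ((Set.finite_range _).isClosed_convexHull ℝ) fun h => hyK (hK h)
  set c : Fin n → ℝ := fun i => f fun j => if i = j then 1 else 0
  have hf (x : Fin n → ℝ) : f x = ∑ i, c i * x i := by
    rw [show f x = (f : (Fin n → ℝ) →ₗ[ℝ] ℝ) x from rfl, LinearMap.pi_apply_eq_sum_univ]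
    simp [c, mul_comm]
  obtain ⟨σ, hσ⟩ := hy.exists_perm_sum_mul_le (a := fun i => |c i|)
    (fun i j hij => by simpa using hij) (fun i => by positivity) (fun i => abs_nonneg _)
  have hx := hfK _ (subset_convexHull ℝ K ⟨(σ, fun i => SignType.sign (c i)), rfl⟩)
  have : f y ≤ f fun i => (SignType.sign (c i) : ℝ) * ((σ i : ℝ) + 1 / 2) := by
    rw [hf, hf]
    calc ∑ i, c i * y i ≤ ∑ i, |c i| * |y i| :=
          sum_le_sum fun i _ => (le_abs_self _).trans (abs_mul _ _).le
      _ ≤ ∑ i, |c i| * ((σ i : ℝ) + 1 / 2) := hσ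
      _ = ∑ i, c i * ((SignType.sign (c i) : ℝ) * ((σ i : ℝ) + 1 / 2)) := by
          simp only [← mul_assoc, self_mul_sign]
  linarith

theorem meanScoreSeqB_iff_weakSubMaj (n : ℕ) (x : Fin n → ℝ) :
    IsMeanScoreSeqB n x ↔
      WeakSubMaj (fun i => |x i|) (fun i : Fin n => (i : ℝ) + 1/2) := by
  refine ⟨fun h S => ?_, isMeanScoreSeqB_of_weakSubMaj⟩
  obtain ⟨T, rfl⟩ := isMeanScoreSeqB_iff.1 h
  have hS : #S ≤ n := by simpa using card_le_univ S
  refine ⟨({i | n - #S ≤ i.val} : Finset (Fin n)),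
    by rw [Fin.card_filter_le_val, Nat.sub_sub_self hS], ?_⟩
  rw [sum_filter_le_val_add_half hS]
  exact T.sum_abs_score_le S
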